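/- For every binary sextic Q = Σ_{i=0}^{6} binom(6,i)·a_i·z1^i·z2^{6−i}, the characteristic polynomial of the endomorphism Q̂ is a polynomial in λ of the form λ^4 + (I2(Q)/2)·λ^2 + β for some β ∈ ℂ; that is, the coefficients of λ^3 and λ vanish and the coefficient of λ^2 equals I2(Q)/2, where I2(Q) := Σ_{i=0}^{6} (−1)^i·binom(6,i)·a_i·a_{6−i} = 2a_0a_6 − 12a_1a_5 + 30a_2a_4 − 20a_3^2. -/

import Mathlib

open Polynomial

/-- The matrix of the endomorphism `Q̂` of the space of binary cubics, in the basis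
`(z1^3, z1^2 z2, z1 z2^2, z2^3)`, for the binary sextic
`Q = Σ_{i=0}^{6} binom(6,i) a_i z1^i z2^{6−i}`. -/
def qhatMat (a : ℕ → ℂ) : Matrix (Fin 4) (Fin 4) ℂ :=
  !![-(a 3), -3 * a 2, -3 * a 1, -(a 0);
     a 4, 3 * a 3, 3 * a 2, a 1;
     -(a 5), -3 * a 4, -3 * a 3, -(a 2);
     a 6, 3 * a 5, 3 * a 4, a 3]

set_option maxHeartbeats 4000000 in
/-- For every binary sextic `Q = Σ binom(6,i) a_i z1^i z2^{6−i}`, the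
characteristic polynomial of `Q̂` has the form `λ^4 + (I2(Q)/2) λ^2 + β`, where
`I2(Q) = 2 a0 a6 − 12 a1 a5 + 30 a2 a4 − 20 a3^2`. -/
theorem qhat_charpoly (a : ℕ → ℂ) :
    ∃ β : ℂ, (qhatMat a).charpoly
      = X ^ 4
        + C ((2 * a 0 * a 6 - 12 * a 1 * a 5 + 30 * a 2 * a 4 - 20 * a 3 ^ 2) / 2) * X ^ 2
        + C β := by
  refine ⟨(qhatMat a).det, ?_⟩
  have h : (qhatMat a).charmatrix =
      !![X + C (a 3), C (3*a 2), C (3*a 1), C (a 0);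
         -C (a 4), X - C (3*a 3), -C (3*a 2), -C (a 1);
         C (a 5), C (3*a 4), X + C (3*a 3), C (a 2);
         -C (a 6), -C (3*a 5), -C (3*a 4), X - C (a 3)] := by
    ext i j
    fin_cases i <;> fin_cases j <;>
      simp [qhatMat, Matrix.charmatrix_apply, Matrix.diagonal]
  rw [Matrix.charpoly, h]
  simp (config := { decide := true }) [Matrix.det_succ_row_zero, Fin.sum_univ_succ,
    Matrix.det_fin_three, qhatMat, Fin.succAbove, Fin.castSucc, Fin.castAdd,
    Fin.castLE, Matrix.cons_val_succ]
  rw [show (2 * a 0 * a 6 - 12 * a 1 * a 5 + 30 * a 2 * a 4 - 20 * a 3 ^ 2) / 2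
      = a 0 * a 6 - 6 * (a 1 * a 5) + 15 * (a 2 * a 4) - 10 * a 3 ^ 2 from by ring]
  simp only [map_mul, map_add, map_sub, map_neg, map_pow, map_ofNat, map_one]
  ring
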